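/- arXiv:1201.4232 — 3 statements merged into one kernel-verified Lean document; each statement's English description precedes it below -/
import Mathlib

section
/- If σ is a real root of x⁴ − 2x² − 4x + 1 = 0 with σ > 1, and ω = (σ+1)²(σ²−1)/(4σ), ω̂ = (σ+1)²/(2σ), then ω ≥ ω̂(ω̂ − 1). -/
theorem stmt_7 (σ : ℝ) (hσ1 : 1 < σ) (hroot : σ ^ 4 - 2 * σ ^ 2 - 4 * σ + 1 = 0) :
    let ω : ℝ := (σ + 1) ^ 2 * (σ ^ 2 - 1) / (4 * σ)
    let ωhat : ℝ := (σ + 1) ^ 2 / (2 * σ)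
    ω ≥ ωhat * (ωhat - 1) := by
  intro ω ωhat
  have hσ0 : (0:ℝ) < σ := by linarith
  have key : σ ^ 3 - σ ^ 2 - σ - 1 ≥ 0 := by
    nlinarith [sq_nonneg (σ - 2), sq_nonneg (σ^2 - σ - 2), sq_nonneg σ, mul_pos hσ0 hσ0]
  show (σ + 1) ^ 2 * (σ ^ 2 - 1) / (4 * σ) ≥ (σ + 1) ^ 2 / (2 * σ) * ((σ + 1) ^ 2 / (2 * σ) - 1)
  rw [ge_iff_le, div_sub' (by positivity), div_mul_div_comm,
    div_le_div_iff₀ (by positivity) (by positivity)]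
  nlinarith [sq_nonneg (σ + 1), mul_nonneg (mul_nonneg (sq_nonneg (σ+1)) key) hσ0.le, mul_pos hσ0 hσ0]
end

section
/- Let σ be the largest real root of x⁴ − 2x² − 4x + 1 = 0, ω = (σ+1)²(σ²−1)/(4σ), ω̂ = (σ+1)²/(2σ). Then the pair (ω, ω̂) lies in the region 𝔄₂, i.e., ω̂ ≥ 2, ω ≥ ω̂(ω̂−1), and it is NOT the case that (ω̂ ≤ φ² and ω ≥ ω̂(ω̂−1)/(3ω̂ − ω̂² − 1)), where φ = (1+√5)/2. -/
theorem stmt_12 (σ : ℝ) (hroot : σ ^ 4 - 2 * σ ^ 2 - 4 * σ + 1 = 0)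
    (hmax : ∀ x : ℝ, x ^ 4 - 2 * x ^ 2 - 4 * x + 1 = 0 → x ≤ σ) :
    let φ : ℝ := (1 + Real.sqrt 5) / 2
    let ω : ℝ := (σ + 1) ^ 2 * (σ ^ 2 - 1) / (4 * σ)
    let ωhat : ℝ := (σ + 1) ^ 2 / (2 * σ)
    ωhat ≥ 2 ∧ ω ≥ ωhat * (ωhat - 1) ∧
      ¬(ωhat ≤ φ ^ 2 ∧ ω ≥ ωhat * (ωhat - 1) / (3 * ωhat - ωhat ^ 2 - 1)) := by
  intro φ ω ωhat
  -- lower bound on σ via IVT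
  have hcont : ContinuousOn (fun x : ℝ => x ^ 4 - 2 * x ^ 2 - 4 * x + 1)
      (Set.Icc (1.94 : ℝ) 1.95) := by fun_prop
  have hsub := intermediate_value_Icc (by norm_num : (1.94 : ℝ) ≤ 1.95) hcont
  have h0 : (0 : ℝ) ∈ Set.Icc ((fun x : ℝ => x ^ 4 - 2 * x ^ 2 - 4 * x + 1) 1.94)
      ((fun x : ℝ => x ^ 4 - 2 * x ^ 2 - 4 * x + 1) 1.95) := by
    constructor <;> norm_num
  obtain ⟨c, hc, hc0⟩ := hsub h0
  have hlow : (1.94 : ℝ) ≤ σ := le_trans hc.1 (hmax c hc0)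
  -- upper bound on σ from the root equation
  have hhigh : σ ≤ 1.95 := by
    by_contra h
    push_neg at h
    nlinarith [sq_nonneg (σ - 1.95), sq_nonneg σ, sq_nonneg (σ ^ 2 - 3.8)]
  have hσ : (0 : ℝ) < σ := by linarith
  refine ⟨?_, ?_, ?_⟩
  · rw [ge_iff_le, le_div_iff₀ (by linarith : (0:ℝ) < 2 * σ)]
    nlinarith [sq_nonneg (σ - 1)]
  · show (σ + 1) ^ 2 * (σ ^ 2 - 1) / (4 * σ) ≥ (σ + 1) ^ 2 / (2 * σ) * ((σ + 1) ^ 2 / (2 * σ) - 1)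
    rw [ge_iff_le, div_sub' (by positivity), div_mul_div_comm,
      div_le_div_iff₀ (by positivity) (by positivity : (0:ℝ) < 4 * σ)]
    nlinarith [sq_nonneg (σ + 1), sq_nonneg σ, hσ]
  · rintro ⟨-, h2⟩
    have hden : (0 : ℝ) < 3 * ωhat - ωhat ^ 2 - 1 := by
      show (0 : ℝ) < 3 * ((σ + 1) ^ 2 / (2 * σ)) - ((σ + 1) ^ 2 / (2 * σ)) ^ 2 - 1
      rw [div_pow]
      have h2σ : (0:ℝ) < 2 * σ := by linarith
      have : 3 * ((σ + 1) ^ 2 / (2 * σ)) - ((σ + 1) ^ 2) ^ 2 / (2 * σ) ^ 2 - 1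
          = (3 * (σ + 1) ^ 2 * (2 * σ) - ((σ + 1) ^ 2) ^ 2 - (2 * σ) ^ 2) / (2 * σ) ^ 2 := by
        field_simp
      rw [this]
      apply div_pos _ (by positivity)
      nlinarith
    rw [ge_iff_le, div_le_iff₀ hden] at h2
    have h2' : (σ + 1) ^ 2 / (2 * σ) * ((σ + 1) ^ 2 / (2 * σ) - 1) ≤
        (σ + 1) ^ 2 * (σ ^ 2 - 1) / (4 * σ) *
          (3 * ((σ + 1) ^ 2 / (2 * σ)) - ((σ + 1) ^ 2 / (2 * σ)) ^ 2 - 1) := h2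
    have h2σ : (2 * σ : ℝ) ≠ 0 := by positivity
    have h4σ : (4 * σ : ℝ) ≠ 0 := by positivity
    field_simp at h2'
    have key : (2*σ^5 - 8*σ^3 - 2*σ) * (σ ^ 4 - 2 * σ ^ 2 - 4 * σ + 1) = 0 := by
      rw [hroot]; ring
    nlinarith [h2', key, pow_pos hσ 3]
end

section
/- Let ω̂ ≥ 2 and ω ≥ ω̂(ω̂−1). Then max(ω̂/(ω̂−1), ω̂ − 1 + ω̂/ω) ≥ φ, where φ = (1+√5)/2. -/
theorem stmt_17 (ω ωhat : ℝ) (h1 : 2 ≤ ωhat) (h2 : ωhat * (ωhat - 1) ≤ ω) :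
    max (ωhat / (ωhat - 1)) (ωhat - 1 + ωhat / ω) ≥ (1 + Real.sqrt 5) / 2 := by
  have h5 : Real.sqrt 5 ^ 2 = 5 := Real.sq_sqrt (by norm_num)
  have h5nn : (0:ℝ) ≤ Real.sqrt 5 := Real.sqrt_nonneg 5
  set φ : ℝ := (1 + Real.sqrt 5) / 2 with hφ
  have hφ2 : φ ^ 2 = φ + 1 := by rw [hφ]; nlinarith
  have hφgt1 : 1 < φ := by
    have : (2:ℝ) ≤ Real.sqrt 5 := by nlinarith
    rw [hφ]; linarith
  rcases le_or_gt ωhat (φ + 1) with h | h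
  · refine le_trans ?_ (le_max_left _ _)
    rw [le_div_iff₀ (by linarith : (0:ℝ) < ωhat - 1)]
    nlinarith [mul_le_mul_of_nonneg_left h (by linarith : (0:ℝ) ≤ φ - 1)]
  · refine le_trans ?_ (le_max_right _ _)
    have hω : 0 < ω := by nlinarith
    have : 0 < ωhat / ω := div_pos (by linarith) hω
    linarith
end
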